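/- arXiv:0811.2696 — 2 statements merged into one kernel-verified Lean document; each statement's English description precedes it below -/
import Mathlib

section
/- Let I ⊆ ℝ^d be a finite nonempty set, let a : I → ℝ, and define g : ℝ^d → ℝ by g(v) = min_{w ∈ I} (⟨w, v⟩ − a(w)). Then for u ∈ ℝ^d, the function v ↦ ⟨u, v⟩ − g(v) is bounded below on ℝ^d if and only if u lies in the convex hull conv(I); moreover, when u ∈ conv(I), the infimum inf_{v ∈ ℝ^d} (⟨u, v⟩ − g(v)) is attained at some point of ℝ^d. -/
/-- The concave piecewise affine function `v ↦ min_{w ∈ I} (⟨w,v⟩ − a(w))`. -/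
noncomputable def tropMin {d : ℕ} (I : Finset (Fin d → ℝ)) (hI : I.Nonempty)
    (a : (Fin d → ℝ) → ℝ) (v : Fin d → ℝ) : ℝ :=
  I.inf' hI fun w => (∑ i, w i * v i) - a w

/-!
Write `v ↦ ⟨u,v⟩ − g(v)` as the maximum `F` of the affine functions `v ↦ ⟨u − w, v⟩ + a(w)`.
For fixed `v`, the points `u` with `⟨u,v⟩ − g(v) ≥ min a` form a half-space containing `I`, hence
`conv(I)`; if `u ∉ conv(I)`, a separating direction `v` makes every slope `⟨u − w, v⟩` negative
and `F` tends to `−∞` along it.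
Attainment for a bounded-below maximum of finitely many affine functions is proved by induction
on the number of pieces: if some direction makes all slopes `≤ 0` and one of them `< 0`, far out
in that direction only the pieces of slope `0` matter, and they have a minimizer by induction;
otherwise `F` is invariant under the common kernel of the slopes and coercive on a complement.
-/

open Filter Finset Set

noncomputable def maxAffine {E ι : Type*} [AddCommGroup E] [Module ℝ E] (I : Finset ι)
    (hI : I.Nonempty) (f : ι → Module.Dual ℝ E) (a : ι → ℝ) (v : E) : ℝ :=
  I.sup' hI fun w => f w v + a w

section Algebraic

variable {E ι : Type*} [AddCommGroup E] [Module ℝ E] {I : Finset ι} (hI : I.Nonempty)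
  {f : ι → Module.Dual ℝ E} {a : ι → ℝ}

theorem eventually_maxAffine_add_smul_le (x e : E) (b : ℝ) (he : ∀ w ∈ I, f w e ≤ 0)
    (hb : ∀ w ∈ I, f w e = 0 → f w x + a w ≤ b) :
    ∀ᶠ t : ℝ in atTop, maxAffine I hI f a (x + t • e) ≤ b := by
  have hpiece : ∀ w ∈ I, ∀ᶠ t : ℝ in atTop, f w x + a w + t * f w e ≤ b := by
    intro w hw
    rcases (he w hw).lt_or_eq with hneg | hzero
    · exact (tendsto_atBot_add_const_left _ _ (tendsto_id.atTop_mul_const_of_neg hneg)).eventually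
        (eventually_le_atBot b)
    · simp [hzero, hb w hw hzero]
  filter_upwards [(eventually_all_finset I).2 hpiece] with t ht
  refine sup'_le _ _ fun w hw => ?_
  simpa only [map_add, map_smul, smul_eq_mul, add_right_comm] using ht w hw

theorem not_bddBelow_maxAffine (e : E) (he : ∀ w ∈ I, f w e < 0) :
    ¬BddBelow (range (maxAffine I hI f a)) := by
  rintro ⟨b, hb⟩
  obtain ⟨t, ht⟩ := (eventually_maxAffine_add_smul_le hI 0 e (b - 1) (fun w hw => (he w hw).le)
    fun w hw h => absurd h (he w hw).ne).exists
  linarith [hb ⟨0 + t • e, rfl⟩]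

theorem maxAffine_add_of_forall_apply_eq_zero (v : E) {l : E} (hl : ∀ w ∈ I, f w l = 0) :
    maxAffine I hI f a (l + v) = maxAffine I hI f a v :=
  sup'_congr hI rfl fun w hw => by rw [map_add, hl w hw, zero_add]

end Algebraic

section Topological

variable {E ι : Type*} [NormedAddCommGroup E] [NormedSpace ℝ E] [FiniteDimensional ℝ E]
  {I : Finset ι} {f : ι → Module.Dual ℝ E} {a : ι → ℝ}

theorem continuous_maxAffine (hI : I.Nonempty) : Continuous (maxAffine I hI f a) :=
  Continuous.finset_sup'_apply hI fun w _ =>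
    (LinearMap.continuous_of_finiteDimensional (f w)).add continuous_const

theorem exists_pos_mul_norm_le (hI : I.Nonempty) (h : ∀ e ≠ 0, ∃ w ∈ I, 0 < f w e) :
    ∃ ε > 0, ∀ e, ∃ w ∈ I, ε * ‖e‖ ≤ f w e := by
  obtain ⟨ε, hε, hsphere⟩ := (isCompact_sphere (0 : E) 1).exists_forall_le'
    (continuous_maxAffine hI (a := 0)).continuousOn fun e he => by
      obtain ⟨w, hw, hpos⟩ := h e (ne_zero_of_mem_unit_sphere ⟨e, he⟩)
      simp only [maxAffine, Pi.zero_apply, add_zero]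
      exact hpos.trans_le (le_sup' (fun w => f w e) hw)
  refine ⟨ε, hε, fun e => ?_⟩
  rcases eq_or_ne e 0 with rfl | he
  · obtain ⟨w, hw⟩ := hI
    exact ⟨w, hw, by simp⟩
  have hnorm : 0 < ‖e‖ := norm_pos_iff.2 he
  obtain ⟨w, hw, hmax⟩ := exists_mem_eq_sup' hI fun w => f w (‖e‖⁻¹ • e)
  refine ⟨w, hw, ?_⟩
  have hεw : ε ≤ f w (‖e‖⁻¹ • e) := hmax ▸ by
    simpa only [maxAffine, Pi.zero_apply, add_zero] using
      hsphere (‖e‖⁻¹ • e) (by simp [norm_smul, hnorm.ne'])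
  rwa [map_smul, smul_eq_mul, le_inv_mul_iff₀ hnorm, mul_comm] at hεw

theorem tendsto_maxAffine_cocompact (hI : I.Nonempty) (h : ∀ e ≠ 0, ∃ w ∈ I, 0 < f w e) :
    Tendsto (maxAffine I hI f a) (cocompact E) atTop := by
  obtain ⟨ε, hε, hcoer⟩ := exists_pos_mul_norm_le hI h
  refine tendsto_atTop_mono (fun v => ?_) (tendsto_atTop_add_const_right _ (I.inf' hI a)
    (tendsto_norm_cocompact_atTop.const_mul_atTop hε))
  obtain ⟨w, hw, hεw⟩ := hcoer v
  calc ε * ‖v‖ + I.inf' hI a ≤ f w v + a w := add_le_add hεw (inf'_le a hw)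
    _ ≤ maxAffine I hI f a v := le_sup' (fun w => f w v + a w) hw

theorem exists_forall_maxAffine_le_of_forall_pos (hI : I.Nonempty)
    (h : ∀ e ≠ 0, ∃ w ∈ I, 0 < f w e) :
    ∃ v₀, ∀ v, maxAffine I hI f a v₀ ≤ maxAffine I hI f a v :=
  (continuous_maxAffine hI).exists_forall_le (tendsto_maxAffine_cocompact hI h)

theorem exists_forall_maxAffine_le_of_forall_nonpos_imp (hI : I.Nonempty)
    (h : ∀ e, (∀ w ∈ I, f w e ≤ 0) → ∀ w ∈ I, f w e = 0) :
    ∃ v₀, ∀ v, maxAffine I hI f a v₀ ≤ maxAffine I hI f a v := by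
  set L := ⨅ w ∈ I, LinearMap.ker (f w)
  have hmemL : ∀ {l}, l ∈ L ↔ ∀ w ∈ I, f w l = 0 := by simp [L, Submodule.mem_iInf]
  obtain ⟨K, hLK⟩ := Submodule.exists_isCompl L
  have hK : ∀ k : K, k ≠ 0 → ∃ w ∈ I, 0 < (f w).comp K.subtype k := by
    intro k hk
    by_contra! hnonpos
    exact hk (Subtype.ext (Submodule.disjoint_def.1 hLK.disjoint k (hmemL.2 (h k hnonpos)) k.2))
  obtain ⟨k₀, hk₀⟩ := exists_forall_maxAffine_le_of_forall_pos hI (a := a) hK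
  refine ⟨k₀, fun v => ?_⟩
  obtain ⟨l, hl, k, hk, rfl⟩ :=
    Submodule.mem_sup.1 (hLK.codisjoint.eq_top ▸ Submodule.mem_top : v ∈ L ⊔ K)
  rw [maxAffine_add_of_forall_apply_eq_zero hI k (hmemL.1 hl)]
  exact hk₀ ⟨k, hk⟩

theorem exists_forall_maxAffine_le_of_bddBelow (hI : I.Nonempty)
    (hb : BddBelow (range (maxAffine I hI f a))) :
    ∃ v₀, ∀ v, maxAffine I hI f a v₀ ≤ maxAffine I hI f a v := by
  induction I using Finset.strongInduction with
  | H I ih =>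
  by_cases hdesc : ∃ e, (∀ w ∈ I, f w e ≤ 0) ∧ ∃ w ∈ I, f w e < 0
  swap
  · push Not at hdesc
    exact exists_forall_maxAffine_le_of_forall_nonpos_imp hI fun e he w hw =>
      le_antisymm (he w hw) (hdesc e he w hw)
  obtain ⟨e, hle, w₁, hw₁, hlt⟩ := hdesc
  set Z := I.filter fun w => f w e = 0
  rcases Z.eq_empty_or_nonempty with hZ | hZ
  · refine absurd hb (not_bddBelow_maxAffine hI e fun w hw => (hle w hw).lt_of_ne fun h => ?_)
    exact filter_eq_empty_iff.1 hZ hw h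
  have hZle : ∀ v, maxAffine Z hZ f a v ≤ maxAffine I hI f a v := fun v =>
    sup'_mono _ (filter_subset _ _) hZ
  have hdescend : ∀ x, ∃ t : ℝ, maxAffine I hI f a (x + t • e) ≤ maxAffine Z hZ f a x := fun x =>
    (eventually_maxAffine_add_smul_le hI x e (maxAffine Z hZ f a x) hle fun w hw h =>
      le_sup' (fun w => f w x + a w) (mem_filter.2 ⟨hw, h⟩)).exists
  obtain ⟨b, hb⟩ := hb
  have hbZ : BddBelow (range (maxAffine Z hZ f a)) := ⟨b, forall_mem_range.2 fun x =>
    let ⟨t, ht⟩ := hdescend x; (hb ⟨x + t • e, rfl⟩).trans ht⟩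
  obtain ⟨x₀, hx₀⟩ := ih Z (filter_ssubset.2 ⟨w₁, hw₁, hlt.ne⟩) hZ hbZ
  obtain ⟨t, ht⟩ := hdescend x₀
  exact ⟨x₀ + t • e, fun v => (ht.trans (hx₀ v)).trans (hZle v)⟩

end Topological

theorem exists_dotProduct_lt_of_notMem {n : Type*} [Fintype n] {s : Set (n → ℝ)} {u : n → ℝ}
    (hconv : Convex ℝ s) (hclosed : IsClosed s) (hu : u ∉ s) :
    ∃ v, ∀ w ∈ s, u ⬝ᵥ v < w ⬝ᵥ v := by
  classical
  obtain ⟨g, c, hgu, hgs⟩ := geometric_hahn_banach_point_closed hconv hclosed hu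
  have hg : ∀ x, g x = x ⬝ᵥ (dotProductEquiv ℝ n).symm g.toLinearMap := fun x => by
    rw [dotProduct_comm, ← dotProductEquiv_apply_apply, LinearEquiv.apply_symm_apply]
    rfl
  refine ⟨(dotProductEquiv ℝ n).symm g.toLinearMap, fun w hw => ?_⟩
  rw [← hg, ← hg]
  exact hgu.trans (hgs w hw)

section TropMin

variable {d : ℕ} {I : Finset (Fin d → ℝ)} (hI : I.Nonempty) (a : (Fin d → ℝ) → ℝ)

theorem tropMin_le {w : Fin d → ℝ} (hw : w ∈ I) (v : Fin d → ℝ) :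
    tropMin I hI a v ≤ w ⬝ᵥ v - a w :=
  inf'_le (fun w => w ⬝ᵥ v - a w) hw

theorem exists_mem_tropMin_eq (v : Fin d → ℝ) : ∃ w ∈ I, tropMin I hI a v = w ⬝ᵥ v - a w :=
  exists_mem_eq_inf' hI _

theorem inf'_le_dotProduct_sub_tropMin {u : Fin d → ℝ}
    (hu : u ∈ convexHull ℝ (I : Set (Fin d → ℝ))) (v : Fin d → ℝ) :
    I.inf' hI a ≤ u ⬝ᵥ v - tropMin I hI a v := by
  have hhalf : Convex ℝ {x : Fin d → ℝ | I.inf' hI a + tropMin I hI a v ≤ x ⬝ᵥ v} :=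
    convex_halfSpace_ge ⟨fun x y => add_dotProduct x y v, fun c x => smul_dotProduct c x v⟩ _
  have hsub : (I : Set (Fin d → ℝ)) ⊆ {x | I.inf' hI a + tropMin I hI a v ≤ x ⬝ᵥ v} :=
    fun w hw => by
      have := tropMin_le hI a hw v
      have := inf'_le a hw
      simp only [mem_ofPred_eq]
      linarith
  have := convexHull_min hsub hhalf hu
  simp only [mem_ofPred_eq] at this
  linarith

theorem dotProduct_sub_tropMin_eq_maxAffine (u v : Fin d → ℝ) :
    u ⬝ᵥ v - tropMin I hI a v =
      maxAffine I hI (fun w => dotProductEquiv ℝ (Fin d) (u - w)) a v := by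
  obtain ⟨w₀, hw₀, hmin⟩ := exists_mem_tropMin_eq hI a v
  simp only [maxAffine, dotProductEquiv_apply_apply, sub_dotProduct]
  refine le_antisymm (le_sup'_of_le _ hw₀ (by rw [hmin]; linarith)) (sup'_le _ _ fun w hw => ?_)
  linarith [tropMin_le hI a hw v]

end TropMin

/-- `v ↦ ⟨u,v⟩ − g(v)` is bounded below iff `u ∈ conv(I)`, and for `u ∈ conv(I)`
the infimum is attained. -/
theorem bddBelow_sub_tropMin_iff_mem_convexHull
    (d : ℕ) (I : Finset (Fin d → ℝ)) (hI : I.Nonempty) (a : (Fin d → ℝ) → ℝ)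
    (u : Fin d → ℝ) :
    (BddBelow (Set.range fun v : Fin d → ℝ => (∑ i, u i * v i) - tropMin I hI a v) ↔
      u ∈ convexHull ℝ (I : Set (Fin d → ℝ))) ∧
    (u ∈ convexHull ℝ (I : Set (Fin d → ℝ)) →
      ∃ v₀ : Fin d → ℝ, ∀ v : Fin d → ℝ,
        (∑ i, u i * v₀ i) - tropMin I hI a v₀ ≤ (∑ i, u i * v i) - tropMin I hI a v) := by
  simp only [← dotProduct.eq_1]
  have hbdd : u ∈ convexHull ℝ (I : Set (Fin d → ℝ)) →
      BddBelow (range fun v => u ⬝ᵥ v - tropMin I hI a v) :=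
    fun hu => ⟨I.inf' hI a, forall_mem_range.2 (inf'_le_dotProduct_sub_tropMin hI a hu)⟩
  simp only [dotProduct_sub_tropMin_eq_maxAffine] at hbdd ⊢
  refine ⟨⟨fun hb => ?_, hbdd⟩, fun hu => exists_forall_maxAffine_le_of_bddBelow hI (hbdd hu)⟩
  by_contra hu
  obtain ⟨v, hv⟩ := exists_dotProduct_lt_of_notMem (convex_convexHull ℝ _)
    (I.finite_toSet.isClosed_convexHull (𝕜 := ℝ)) hu
  refine not_bddBelow_maxAffine hI v (fun w hw => ?_) hb
  simpa [sub_dotProduct] using hv w (subset_convexHull ℝ _ hw)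
end

section
/- Let 𝔽_q be a finite field with q elements, let m ≥ 1, let r_1, …, r_m be natural numbers with r_i ≤ q − 1 for all i, and let ũ ∈ ℤ^m. Then there exists a family of coefficients c : ℤ^m → 𝔽_q, not all zero, supported on the lattice box ũ + ∏_{i=1}^m {0, 1, …, r_i}, such that the function f : ((𝔽_q)ˣ)^m → 𝔽_q defined by f(x) = Σ_u c_u x^u (where x^u := ∏_i x_i^{u_i}) is nonzero at exactly ∏_{i=1}^m (q − 1 − r_i) points of ((𝔽_q)ˣ)^m; equivalently, f vanishes at exactly Σ_{j=1}^m (−1)^{j+1} Σ_{1 ≤ i_1 < … < i_j ≤ m} r_{i_1} ⋯ r_{i_j} (q−1)^{m−j} points of the torus. In particular, any linear evaluation code over ((𝔽_q)ˣ)^m whose function space contains all Laurent monomials x^u with u in the box ũ + ∏_i {0,…,r_i} has minimum Hamming distance at most ∏_{i=1}^m (q − 1 − r_i). -/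
/-!
Choose sets `S i ⊆ Fˣ` with `#(S i) = r i` and take `f x = x ^ ut * ∏ i, ∏ η ∈ S i, (x i - η)`.
Expanding each factor `x i ^ ut i * p i (x i)` shows that the coefficients of `f` form a product
family supported on the box, and since `x i ≠ 0`, `f x ≠ 0` exactly when `x i ∉ S i` for every
`i`; there are `∏ i, (q - 1 - r i)` such points.
-/

open Finset Polynomial

variable {K : Type*} [Field K]

theorem Polynomial.sum_Icc_coeff_mul_zpow {p : K[X]} {r : ℕ} (hp : p.natDegree ≤ r) (a : ℤ)
    {x : K} (hx : x ≠ 0) :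
    ∑ n ∈ Icc a (a + r), p.coeff (n - a).toNat * x ^ n = x ^ a * p.eval x := by
  have hlen : (a + r + 1 - a).toNat = r + 1 := by omega
  rw [Int.Icc_eq_finset_map, sum_map, hlen, eval_eq_sum_range' (Nat.lt_succ_of_le hp), mul_sum]
  refine sum_congr rfl fun k _ => ?_
  simp only [Function.Embedding.trans_apply, Nat.castEmbedding_apply, addLeftEmbedding_apply,
    add_sub_cancel_left, Int.toNat_natCast, zpow_add₀ hx, zpow_natCast]
  ring

theorem Polynomial.eval_prod_X_sub_C_units_ne_zero_iff (S : Finset Kˣ) (x : Kˣ) :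
    (∏ η ∈ S, (X - C (η : K))).eval (x : K) ≠ 0 ↔ x ∉ S := by
  simp [eval_prod, prod_ne_zero_iff, sub_ne_zero, Units.val_inj]

theorem Nat.card_pi_forall_notMem {ι α : Type*} [Fintype ι] [DecidableEq ι] [Fintype α]
    [DecidableEq α] (S : ι → Finset α) :
    Nat.card {x : ι → α // ∀ i, x i ∉ S i} = ∏ i, (Fintype.card α - #(S i)) := by
  rw [Nat.card_eq_fintype_card, Fintype.card_subtype]
  have : (univ.filter fun x : ι → α => ∀ i, x i ∉ S i) = Fintype.piFinset fun i => (S i)ᶜ := by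
    ext x; simp
  simp [this, card_compl]

section Box

variable {ι : Type*} [Fintype ι] [DecidableEq ι]

/-- The coefficient family of the Laurent polynomial `x ^ a * ∏ i, p i (x i)`, for
`(p i).natDegree ≤ r i`. -/
noncomputable def boxCoeff (a : ι → ℤ) (r : ι → ℕ) (p : ι → K[X]) (u : ι → ℤ) : K :=
  if u ∈ Icc a (fun i => a i + r i) then ∏ i, (p i).coeff (u i - a i).toNat else 0

variable {a : ι → ℤ} {r : ι → ℕ} {p : ι → K[X]}

theorem boxCoeff_eq_zero_of_notMem {u : ι → ℤ} (hu : u ∉ Icc a (fun i => a i + r i)) :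
    boxCoeff a r p u = 0 :=
  if_neg hu

theorem boxCoeff_ne_zero (hp : ∀ i, p i ≠ 0) (hdeg : ∀ i, (p i).natDegree ≤ r i) :
    boxCoeff a r p ≠ 0 := by
  intro h
  have hmem : (fun i => a i + (p i).natDegree) ∈ Icc a (fun i => a i + r i) := by
    simp only [mem_Icc, Pi.le_def]; constructor <;> intro i <;> simp [hdeg i]
  have := congr_fun h (fun i => a i + (p i).natDegree)
  simp only [boxCoeff, hmem, if_true, add_sub_cancel_left, Int.toNat_natCast, coeff_natDegree] at this
  exact prod_ne_zero_iff.mpr (fun i _ => leadingCoeff_ne_zero.mpr (hp i)) this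

theorem sum_boxCoeff_mul_prod_zpow (hdeg : ∀ i, (p i).natDegree ≤ r i) (x : ι → Kˣ) :
    ∑ u ∈ Icc a (fun i => a i + r i), boxCoeff a r p u * ((∏ i, x i ^ u i : Kˣ) : K) =
      ∏ i, (x i : K) ^ a i * (p i).eval (x i : K) := by
  simp_rw [← sum_Icc_coeff_mul_zpow (hdeg _) _ (x _).ne_zero, prod_univ_sum]
  refine sum_congr rfl fun u hu => ?_
  have hu' : u ∈ Icc a (fun i => a i + r i) := hu
  simp [boxCoeff, hu', prod_mul_distrib]

end Box

theorem exists_laurent_poly_supported_on_box_with_exact_nonvanishing_count_general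
    (F : Type) [Field F] [Fintype F] (q : ℕ) (hq : Fintype.card F = q)
    (m : ℕ) (r : Fin m → ℕ) (hr : ∀ i, r i ≤ q - 1)
    (ut : Fin m → ℤ) :
    ∃ c : (Fin m → ℤ) → F,
      c ≠ 0 ∧
      (∀ u : Fin m → ℤ, u ∉ Finset.Icc ut (fun i => ut i + (r i : ℤ)) → c u = 0) ∧
      Nat.card {x : Fin m → Fˣ //
          (∑ u ∈ Finset.Icc ut (fun i => ut i + (r i : ℤ)),
            c u * ((∏ i, (x i) ^ (u i) : Fˣ) : F)) ≠ 0} =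
        ∏ i, (q - 1 - r i) := by
  classical
  have hcard : Fintype.card Fˣ = q - 1 := by rw [Fintype.card_units, hq]
  choose S _ hS using fun i => exists_subset_card_eq (s := (univ : Finset Fˣ)) (n := r i)
    (by simpa [hcard] using hr i)
  set p : Fin m → F[X] := fun i => ∏ η ∈ S i, (X - C (η : F))
  have hdeg : ∀ i, (p i).natDegree ≤ r i := fun i => by simp [p, hS]
  refine ⟨boxCoeff ut r p, boxCoeff_ne_zero (fun i => (monic_prod_X_sub_C _ _).ne_zero) hdeg,
    fun u => boxCoeff_eq_zero_of_notMem, ?_⟩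
  simp only [sum_boxCoeff_mul_prod_zpow hdeg, prod_ne_zero_iff, mem_univ, forall_const,
    mul_ne_zero_iff, zpow_ne_zero, Units.ne_zero, ne_eq, not_false_eq_true, true_and, p,
    eval_prod_X_sub_C_units_ne_zero_iff, Nat.card_pi_forall_notMem, hcard, hS]

/-- Core counting construction for the upper bound on the minimum distance of `T`-codes:
over a finite field with `q` elements there is a nonzero family of coefficients supported
on the lattice box `ũ + ∏_i {0,…,r_i}` whose associated Laurent polynomial is nonzero at
exactly `∏_i (q − 1 − r_i)` points of the torus `((𝔽_q)ˣ)^m`. -/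
theorem exists_laurent_poly_supported_on_box_with_exact_nonvanishing_count
    (F : Type) [Field F] [Fintype F] (q : ℕ) (hq : Fintype.card F = q)
    (m : ℕ) (hm : 1 ≤ m) (r : Fin m → ℕ) (hr : ∀ i, r i ≤ q - 1)
    (ut : Fin m → ℤ) :
    ∃ c : (Fin m → ℤ) → F,
      c ≠ 0 ∧
      (∀ u : Fin m → ℤ, u ∉ Finset.Icc ut (fun i => ut i + (r i : ℤ)) → c u = 0) ∧
      Nat.card {x : Fin m → Fˣ //
          (∑ u ∈ Finset.Icc ut (fun i => ut i + (r i : ℤ)),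
            c u * ((∏ i, (x i) ^ (u i) : Fˣ) : F)) ≠ 0} =
        ∏ i, (q - 1 - r i) :=
  exists_laurent_poly_supported_on_box_with_exact_nonvanishing_count_general F q hq m r hr ut
end
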